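/- arXiv:math/0403231 — 7 statements merged into one kernel-verified Lean document; each statement's English description precedes it below -/
import Mathlib

section
/- Let $A: F\to H$ be a contractive module homomorphism of Hilbert modules with dense range that induces a unitary operator $\dot A: F/(Z\cdot F)\to H/(Z\cdot H)$ between the quotient Hilbert spaces. Then $A$ restricts to a unitary operator from $F\ominus(Z\cdot F)$ onto $H\ominus(Z\cdot H)$; in particular $\|A\zeta\|=\|\zeta\|$ and $A\zeta\perp Z\cdot H$ for every $\zeta\in F\ominus(Z\cdot F)$. -/
open scoped InnerProductSpace
open ContinuousLinearMap
open Submodule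

private lemma infDist_eq_norm_sub_proj {E : Type*} [NormedAddCommGroup E]
    [InnerProductSpace ℂ E] (K : Submodule ℂ E) [HasOrthogonalProjection K] (y : E) :
    Metric.infDist y (K : Set E) = ‖y - orthogonalProjection K y‖ := by
  rw [Metric.infDist_eq_iInf, show (orthogonalProjection K y : E) = K.starProjection y from rfl,
    starProjection_minimal]
  congr 1
  ext x
  rw [dist_eq_norm]

set_option maxHeartbeats 1000000 in
/-- If `A : F → H` is a contractive module homomorphism of Hilbert modules with dense
range which induces a unitary operator between the quotients `F/(Z·F) → H/(Z·H)`
(equivalently, an isometry of quotients: surjectivity is automatic), then `A` restricts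
to a unitary from `F ⊖ (Z·F)` onto `H ⊖ (Z·H)`. -/
theorem cover_restricts_to_unitary {F H : Type*}
    [NormedAddCommGroup F] [InnerProductSpace ℂ F] [CompleteSpace F]
    [NormedAddCommGroup H] [InnerProductSpace ℂ H] [CompleteSpace H]
    (d : ℕ) (S : Fin d → F →L[ℂ] F) (T : Fin d → H →L[ℂ] H)
    (hrowS : ∀ ξ : Fin d → F, ‖∑ i, S i (ξ i)‖ ^ 2 ≤ ∑ i, ‖ξ i‖ ^ 2)
    (hrowT : ∀ ξ : Fin d → H, ‖∑ i, T i (ξ i)‖ ^ 2 ≤ ∑ i, ‖ξ i‖ ^ 2)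
    (A : F →L[ℂ] H) (hA : ‖A‖ ≤ 1) (hmod : ∀ k, A ∘L S k = T k ∘L A)
    (hdense : DenseRange A) :
    let ZF : Submodule ℂ F := (⨆ k, LinearMap.range (S k : F →ₗ[ℂ] F)).topologicalClosure
    let ZH : Submodule ℂ H := (⨆ k, LinearMap.range (T k : H →ₗ[ℂ] H)).topologicalClosure
    -- the induced map of quotient Hilbert spaces is an isometry (hence unitary):
    (∀ ζ : F, Metric.infDist (A ζ) (ZH : Set H) = Metric.infDist ζ (ZF : Set F)) →
      (∀ ζ ∈ ZFᗮ, ‖A ζ‖ = ‖ζ‖ ∧ A ζ ∈ ZHᗮ) ∧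
        ∀ η ∈ ZHᗮ, ∃ ζ ∈ ZFᗮ, A ζ = η := by
  intro ZF ZH hiso
  have hZFc : IsClosed (ZF : Set F) := Submodule.isClosed_topologicalClosure _
  have hZHc : IsClosed (ZH : Set H) := Submodule.isClosed_topologicalClosure _
  haveI : CompleteSpace ZF := hZFc.completeSpace_coe
  haveI : CompleteSpace ZH := hZHc.completeSpace_coe
  -- infDist from an orthogonal vector is the norm
  have hdistF : ∀ ζ ∈ ZFᗮ, Metric.infDist ζ (ZF : Set F) = ‖ζ‖ := by
    intro ζ hζ
    rw [infDist_eq_norm_sub_proj]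
    rw [orthogonalProjection_mem_subspace_orthogonalComplement_eq_zero hζ]
    simp
  -- part 1 : A is isometric on ZFᗮ and maps it into ZHᗮ
  have part1 : ∀ ζ ∈ ZFᗮ, ‖A ζ‖ = ‖ζ‖ ∧ A ζ ∈ ZHᗮ := by
    intro ζ hζ
    have h1 : ‖A ζ - orthogonalProjection ZH (A ζ)‖ = ‖ζ‖ := by
      rw [← infDist_eq_norm_sub_proj, hiso ζ, hdistF ζ hζ]
    have hle : ‖A ζ‖ ≤ ‖ζ‖ := by
      calc ‖A ζ‖ ≤ ‖A‖ * ‖ζ‖ := A.le_opNorm ζ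
        _ ≤ 1 * ‖ζ‖ := by nlinarith [norm_nonneg ζ]
        _ = ‖ζ‖ := one_mul _
    have hpyth : ‖A ζ‖ ^ 2 = ‖orthogonalProjection ZH (A ζ)‖ ^ 2
        + ‖A ζ - orthogonalProjection ZH (A ζ)‖ ^ 2 := by
      have h2 := norm_sq_eq_add_norm_sq_projection (A ζ) ZH
      have h3 : ‖orthogonalProjection ZHᗮ (A ζ)‖
          = ‖A ζ - orthogonalProjection ZH (A ζ)‖ := by
        rw [orthogonalProjection_orthogonal (K := ZH) (A ζ)]
        rfl
      rwa [h3] at h2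
    rw [h1] at hpyth
    have hco : ‖((orthogonalProjection ZH (A ζ)) : H)‖
        = ‖orthogonalProjection ZH (A ζ)‖ := rfl
    have hp0' : (orthogonalProjection ZH (A ζ) : H) = 0 := by
      have h4 : ‖(orthogonalProjection ZH (A ζ) : H)‖ = 0 := by
        nlinarith [norm_nonneg (A ζ), norm_nonneg ζ, hco,
          norm_nonneg ((orthogonalProjection ZH (A ζ) : H))]
      simpa using h4
    have hp0n : ‖orthogonalProjection ZH (A ζ)‖ = 0 := by rw [← hco, hp0']; simp
    refine ⟨le_antisymm hle (by nlinarith [norm_nonneg (A ζ), norm_nonneg ζ]), ?_⟩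
    have h3 : A ζ - (orthogonalProjection ZH (A ζ) : H) ∈ ZHᗮ :=
      sub_starProjection_mem_orthogonal (K := ZH) (A ζ)
    rwa [hp0', sub_zero] at h3
  refine ⟨part1, ?_⟩
  -- A maps ZF into ZH
  have hAZF : ∀ x ∈ ZF, A x ∈ ZH := by
    intro x hx
    have hmap : Submodule.map (A : F →ₗ[ℂ] H) (⨆ k, LinearMap.range (S k : F →ₗ[ℂ] F))
        ≤ ⨆ k, LinearMap.range (T k : H →ₗ[ℂ] H) := by
      rw [Submodule.map_iSup]
      refine iSup_le fun k => ?_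
      rintro - ⟨y, ⟨w, rfl⟩, rfl⟩
      have hc : (A : F →ₗ[ℂ] H) ((S k : F →ₗ[ℂ] F) w) = T k (A w) :=
        congrFun (congrArg DFunLike.coe (hmod k)) w
      rw [hc]
      exact Submodule.mem_iSup_of_mem k ⟨A w, rfl⟩
    have hsub : A '' ((⨆ k, LinearMap.range (S k : F →ₗ[ℂ] F) : Submodule ℂ F) : Set F)
        ⊆ (ZH : Set H) := by
      rintro - ⟨y, hy, rfl⟩
      exact Submodule.le_topologicalClosure _ (hmap ⟨y, hy, rfl⟩)
    have h4 : A '' closure ((⨆ k, LinearMap.range (S k : F →ₗ[ℂ] F) : Submodule ℂ F) : Set F)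
        ⊆ closure (A '' ((⨆ k, LinearMap.range (S k : F →ₗ[ℂ] F) : Submodule ℂ F) : Set F)) :=
      image_closure_subset_closure_image A.continuous
    have h5 : A x ∈ closure (A '' ((⨆ k, LinearMap.range (S k : F →ₗ[ℂ] F) : Submodule ℂ F) : Set F)) :=
      h4 ⟨x, hx, rfl⟩
    have h6 := closure_mono hsub h5
    rwa [hZHc.closure_eq] at h6
  -- the image of ZFᗮ is a closed submodule of ZHᗮ
  set K : Submodule ℂ H := Submodule.map (A : F →ₗ[ℂ] H) ZFᗮ with hK
  have hKle : K ≤ ZHᗮ := by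
    rintro - ⟨ζ, hζ, rfl⟩
    exact (part1 ζ hζ).2
  have hKclosed : IsClosed (K : Set H) := by
    have hisom : Isometry (fun ζ : ZFᗮ => A (ζ : F)) := by
      refine AddMonoidHomClass.isometry_of_norm
        (((A : F →ₗ[ℂ] H).comp ZFᗮ.subtype).toAddMonoidHom) (fun ζ => (part1 ζ ζ.2).1)
    have : IsClosed (Set.range (fun ζ : ZFᗮ => A (ζ : F))) :=
      hisom.isClosedEmbedding.isClosed_range
    have hrange : Set.range (fun ζ : ZFᗮ => A (ζ : F)) = (K : Set H) := by
      ext y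
      constructor
      · rintro ⟨ζ, rfl⟩; exact ⟨ζ, ζ.2, rfl⟩
      · rintro ⟨ζ, hζ, rfl⟩; exact ⟨⟨ζ, hζ⟩, rfl⟩
    rwa [hrange] at this
  haveI : CompleteSpace K := hKclosed.completeSpace_coe
  -- surjectivity
  intro η hη
  have hresid : η - orthogonalProjection K η = 0 := by
    set r := η - orthogonalProjection K η with hr
    have hrK : r ∈ Kᗮ := sub_starProjection_mem_orthogonal (K := K) η
    have hrZH : r ∈ ZHᗮ :=
      sub_mem hη (hKle (orthogonalProjection K η).2)
    -- r is orthogonal to the range of A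
    have hrA : ∀ f : F, ⟪A f, r⟫_ℂ = 0 := by
      intro f
      have hdecomp : f = (orthogonalProjection ZF f : F) + (f - orthogonalProjection ZF f) := by
        abel
      have h1 : ⟪A (orthogonalProjection ZF f : F), r⟫_ℂ = 0 :=
        (Submodule.mem_orthogonal _ _).1 hrZH _
          (hAZF _ (orthogonalProjection ZF f).2)
      have h2 : ⟪A (f - orthogonalProjection ZF f), r⟫_ℂ = 0 := by
        have hm : A (f - orthogonalProjection ZF f) ∈ K :=
          ⟨f - orthogonalProjection ZF f,
            sub_starProjection_mem_orthogonal (K := ZF) f, rfl⟩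
        exact (Submodule.mem_orthogonal _ _).1 hrK _ hm
      calc ⟪A f, r⟫_ℂ
          = ⟪A ((orthogonalProjection ZF f : F) + (f - orthogonalProjection ZF f)), r⟫_ℂ := by
            rw [← hdecomp]
        _ = ⟪A (orthogonalProjection ZF f : F), r⟫_ℂ
            + ⟪A (f - orthogonalProjection ZF f), r⟫_ℂ := by
            rw [map_add, inner_add_left]
        _ = 0 := by rw [h1, h2, add_zero]
    -- by density, r is orthogonal to everything
    have hall : ∀ y : H, ⟪y, r⟫_ℂ = 0 := by
      intro y
      have hcont : Continuous (fun y : H => ⟪y, r⟫_ℂ) := continuous_inner.comp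
        (by continuity : Continuous fun y : H => (y, r))
      have : Set.EqOn (fun y : H => ⟪y, r⟫_ℂ) (fun _ => (0 : ℂ)) (Set.range A) := by
        rintro - ⟨f, rfl⟩
        exact hrA f
      have := Continuous.ext_on hdense hcont continuous_const this
      exact congrFun this y
    have : r = 0 := by
      have := hall r
      exact inner_self_eq_zero.mp this
    exact this
  have hηK : η ∈ K := by
    have heq : η = (orthogonalProjection K η : H) := sub_eq_zero.mp hresid
    rw [heq]
    exact (orthogonalProjection K η).2
  obtain ⟨ζ, hζ, hζ2⟩ := hηK
  exact ⟨ζ, hζ, hζ2⟩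
end

section
/- Let $H$ be a Hilbert module over $\mathbb C\langle z_1,\dots,z_d\rangle$ generated by a set of $n$ vectors (i.e. the module span of these vectors is dense). Then the defect $\dim(H/(Z\cdot H))$ is at most $n$. -/
open scoped InnerProductSpace

/-- If a Hilbert module `H` over `ℂ⟨z₁,…,z_d⟩` is generated by `n` vectors (the span of
all `f(T₁,…,T_d)ζᵢ` is dense), then the defect `dim(H/(Z·H))` is at most `n`. -/
theorem defect_le_card_generators {H : Type*} [NormedAddCommGroup H]
    [InnerProductSpace ℂ H] [CompleteSpace H] (d n : ℕ) (T : Fin d → H →L[ℂ] H)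
    (hrow : ∀ ξ : Fin d → H, ‖∑ i, T i (ξ i)‖ ^ 2 ≤ ∑ i, ‖ξ i‖ ^ 2)
    (ζ : Fin n → H)
    (hgen : (Submodule.span ℂ {x : H | ∃ (w : List (Fin d)) (i : Fin n),
        x = ((w.map T).prod) (ζ i)}).topologicalClosure = ⊤) :
    Module.rank ℂ (((⨆ k, LinearMap.range (T k : H →ₗ[ℂ] H)).topologicalClosure)ᗮ : Submodule ℂ H)
      ≤ n := by
  classical
  set M := (⨆ k, LinearMap.range (T k : H →ₗ[ℂ] H)).topologicalClosure with hMdef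
  haveI : CompleteSpace M :=
    IsClosed.completeSpace_coe (hs := Submodule.isClosed_topologicalClosure _)
  set P : H →L[ℂ] Mᗮ := Mᗮ.orthogonalProjectionOnto with hPdef
  set S : Set H := {x : H | ∃ (w : List (Fin d)) (i : Fin n),
      x = ((w.map T).prod) (ζ i)} with hSdef
  -- P kills M
  have hPM : ∀ x ∈ M, P x = 0 := fun x hx =>
    Submodule.orthogonalProjectionOnto_apply_of_mem_orthogonal
      (Submodule.le_orthogonal_orthogonal M hx)
  -- each element of S maps into span of P ∘ ζ
  have hPS : ∀ x ∈ S, P x ∈ Submodule.span ℂ (Set.range fun i => P (ζ i)) := by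
    rintro x ⟨w, i, rfl⟩
    cases w with
    | nil =>
      simp only [List.map_nil, List.prod_nil, ContinuousLinearMap.one_apply]
      exact Submodule.subset_span ⟨i, rfl⟩
    | cons k w' =>
      have hx : ((List.map T (k :: w')).prod) (ζ i) ∈ M := by
        apply Submodule.le_topologicalClosure
        refine Submodule.mem_iSup_of_mem k ?_
        simp only [List.map_cons, List.prod_cons, ContinuousLinearMap.mul_apply]
        exact ⟨_, rfl⟩
      rw [hPM _ hx]
      exact Submodule.zero_mem _
  haveI : FiniteDimensional ℂ
      (Submodule.span ℂ (Set.range fun i => P (ζ i))) :=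
    FiniteDimensional.span_of_finite ℂ (Set.finite_range _)
  have hclosed : IsClosed
      ((Submodule.span ℂ (Set.range fun i => P (ζ i)) : Submodule ℂ Mᗮ) : Set Mᗮ) :=
    Submodule.closed_of_finiteDimensional _
  have key : ∀ y : Mᗮ, y ∈ Submodule.span ℂ (Set.range fun i => P (ζ i)) := by
    intro y
    have hdense : Dense ((Submodule.span ℂ S : Submodule ℂ H) : Set H) := by
      rw [Submodule.dense_iff_topologicalClosure_eq_top]
      exact hgen
    have h1 : (y : H) ∈ closure ((Submodule.span ℂ S : Submodule ℂ H) : Set H) :=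
      hdense _
    have h2 : P (y : H) ∈ closure (P '' ((Submodule.span ℂ S : Submodule ℂ H) : Set H)) :=
      image_closure_subset_closure_image P.continuous ⟨_, h1, rfl⟩
    have h3 : P '' ((Submodule.span ℂ S : Submodule ℂ H) : Set H) ⊆
        ((Submodule.span ℂ (Set.range fun i => P (ζ i)) : Submodule ℂ Mᗮ) : Set Mᗮ) := by
      rintro _ ⟨x, hx, rfl⟩
      have : Submodule.span ℂ S ≤
          (Submodule.span ℂ (Set.range fun i => P (ζ i))).comap (P : H →ₗ[ℂ] Mᗮ) := by
        rw [Submodule.span_le]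
        intro z hz
        exact hPS z hz
      exact this hx
    have h4 : P (y : H) ∈
        ((Submodule.span ℂ (Set.range fun i => P (ζ i)) : Submodule ℂ Mᗮ) : Set Mᗮ) := by
      rw [← hclosed.closure_eq]
      exact closure_mono h3 h2
    rwa [Submodule.orthogonalProjectionOnto_mem_subspace_eq_self y] at h4
  have htop : (⊤ : Submodule ℂ Mᗮ) = Submodule.span ℂ (Set.range fun i => P (ζ i)) :=
    le_antisymm (fun y _ => key y) le_top
  calc Module.rank ℂ Mᗮ
      = Module.rank ℂ (⊤ : Submodule ℂ Mᗮ) := (rank_top ℂ Mᗮ).symm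
    _ = Module.rank ℂ (Submodule.span ℂ (Set.range fun i => P (ζ i))) := by rw [htop]
    _ ≤ Cardinal.mk (Set.range fun i => P (ζ i)) := rank_span_le _
    _ ≤ n := by
        have h := Cardinal.mk_range_le_lift (f := fun i => P (ζ i))
        simp only [Cardinal.mk_fin, Cardinal.lift_natCast, Cardinal.lift_id'] at h
        exact_mod_cast h
end

section
/- Every finitely generated graded contractive Hilbert module $H$ over $\mathbb C\langle z_1,\dots,z_d\rangle$ is properly generated: the finite-dimensional subspace $G=H\ominus(Z\cdot H)$ satisfies $H=\overline{\mathrm{span}}\{f\cdot\zeta : f\in\mathbb C\langle z_1,\dots,z_d\rangle,\ \zeta\in G\}$. -/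
open scoped InnerProductSpace
open ContinuousLinearMap

namespace GradedAux

variable {H : Type*} [NormedAddCommGroup H] [InnerProductSpace ℂ H]

/-- The gauge eigenspace of degree `n`. -/
def V (Γ : Circle → H →L[ℂ] H) (n : ℤ) : Submodule ℂ H where
  carrier := {ξ : H | ∀ u : Circle, Γ u ξ = ((u : ℂ) ^ n) • ξ}
  add_mem' := by
    intro a b ha hb u
    rw [map_add, ha u, hb u, smul_add]
  zero_mem' := by
    intro u; rw [map_zero, smul_zero]
  smul_mem' := by
    intro c a ha u
    rw [map_smul, ha u, smul_comm]

lemma mem_V_iff {Γ : Circle → H →L[ℂ] H} {n : ℤ} {x : H} :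
    x ∈ V Γ n ↔ ∀ u : Circle, Γ u x = ((u : ℂ) ^ n) • x := Iff.rfl

lemma V_orthogonal [CompleteSpace H] {Γ : Circle → H →L[ℂ] H}
    (hu : ∀ u : Circle, adjoint (Γ u) ∘L Γ u = 1)
    {m n : ℤ} (hmn : m ≠ n) {x y : H} (hx : x ∈ V Γ m) (hy : y ∈ V Γ n) :
    ⟪x, y⟫_ℂ = 0 := by
  set k : ℤ := n - m with hk
  have hk0 : k ≠ 0 := sub_ne_zero.mpr (Ne.symm hmn)
  have hk0' : (k : ℂ) ≠ 0 := Int.cast_ne_zero.mpr hk0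
  set u : Circle := Circle.exp (Real.pi / (k : ℝ)) with hudef
  have hiso : ⟪Γ u x, Γ u y⟫_ℂ = ⟪x, y⟫_ℂ := by
    rw [← ContinuousLinearMap.adjoint_inner_right (Γ u) x (Γ u y)]
    congr 1
    have h1 : (adjoint (Γ u) ∘L Γ u) y = y := by rw [hu u]; rfl
    exact h1
  have hcon : (starRingEnd ℂ) ((u : ℂ) ^ m) = (u : ℂ) ^ (-m) := by
    rw [map_zpow₀, ← Circle.coe_inv_eq_conj, Circle.coe_inv, inv_zpow, zpow_neg]
  have h2 : ⟪x, y⟫_ℂ = ((u : ℂ) ^ k) * ⟪x, y⟫_ℂ := by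
    conv_lhs => rw [← hiso]
    rw [hx u, hy u, inner_smul_left, inner_smul_right, hcon, ← mul_assoc,
      ← zpow_add₀ (Circle.coe_ne_zero u)]
    congr 2
    omega
  have huk : ((u : ℂ)) ^ k = -1 := by
    rw [hudef, Circle.coe_exp, ← Complex.exp_int_mul]
    rw [show (k : ℂ) * ((Real.pi / (k : ℝ) : ℝ) * Complex.I) = Real.pi * Complex.I by
      push_cast
      field_simp]
    exact Complex.exp_pi_mul_I
  have h3 : ((u : ℂ) ^ k - 1) * ⟪x, y⟫_ℂ = 0 := by linear_combination -h2
  rcases mul_eq_zero.mp h3 with h | h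
  · exfalso
    rw [huk] at h
    norm_num at h
  · exact h

lemma V_mapT {Γ : Circle → H →L[ℂ] H} {d : ℕ} {T : Fin d → H →L[ℂ] H}
    (hcomm : ∀ (u : Circle) (k : Fin d), Γ u ∘L T k = (u : ℂ) • (T k ∘L Γ u))
    (k : Fin d) {m : ℤ} {x : H} (hx : x ∈ V Γ m) : T k x ∈ V Γ (m + 1) := by
  intro u
  have h1 : Γ u (T k x) = (u : ℂ) • T k (Γ u x) := by
    have := congrArg (fun f : H →L[ℂ] H => f x) (hcomm u k)
    simpa using this
  rw [h1, hx u, map_smul, smul_smul]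
  congr 1
  rw [zpow_add_one₀ (Circle.coe_ne_zero u)]
  ring

lemma V_word {Γ : Circle → H →L[ℂ] H} {d : ℕ} {T : Fin d → H →L[ℂ] H}
    (hcomm : ∀ (u : Circle) (k : Fin d), Γ u ∘L T k = (u : ℂ) • (T k ∘L Γ u))
    (w : List (Fin d)) {m : ℤ} {x : H} (hx : x ∈ V Γ m) :
    ((w.map T).prod) x ∈ V Γ (m + w.length) := by
  induction w with
  | nil => simpa using hx
  | cons k w ih =>
    have h1 : (((k :: w).map T).prod) x = T k (((w.map T).prod) x) := by
      simp [List.map_cons, List.prod_cons, ContinuousLinearMap.mul_apply]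
    have h2 : (m : ℤ) + ((k :: w).length : ℤ) = (m + (w.length : ℤ)) + 1 := by
      push_cast [List.length_cons]; ring
    rw [h1, h2]
    exact V_mapT hcomm k ih

end GradedAux

set_option maxHeartbeats 1000000 in
set_option synthInstance.maxHeartbeats 200000 in
/-- Every finitely generated graded contractive Hilbert module over `ℂ⟨z₁,…,z_d⟩` is
properly generated: `G = H ⊖ (Z·H)` is finite-dimensional and its module span is dense. -/
theorem graded_finitelyGenerated_properlyGenerated {H : Type*} [NormedAddCommGroup H]
    [InnerProductSpace ℂ H] [CompleteSpace H] (d s : ℕ) (T : Fin d → H →L[ℂ] H)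
    (hrow : ∀ ξ : Fin d → H, ‖∑ i, T i (ξ i)‖ ^ 2 ≤ ∑ i, ‖ξ i‖ ^ 2)
    (Γ : Circle → H →L[ℂ] H)
    (hunit : ∀ u : Circle, Γ u ∘L adjoint (Γ u) = 1 ∧ adjoint (Γ u) ∘L Γ u = 1)
    (hcont : ∀ ξ : H, Continuous fun u : Circle => Γ u ξ)
    (hcomm : ∀ (u : Circle) (k : Fin d), Γ u ∘L T k = (u : ℂ) • (T k ∘L Γ u))
    (ζ : Fin s → H)
    -- each generator has finite Γ-spectrum: it is a finite sum of gauge eigenvectors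
    (hspec : ∀ i : Fin s, ζ i ∈ Submodule.span ℂ
        {ξ : H | ∃ m : ℤ, ∀ u : Circle, Γ u ξ = ((u : ℂ) ^ m) • ξ})
    (hgen : (Submodule.span ℂ {x : H | ∃ (w : List (Fin d)) (i : Fin s),
        x = ((w.map T).prod) (ζ i)}).topologicalClosure = ⊤) :
    FiniteDimensional ℂ
        ((((⨆ k, LinearMap.range (T k : H →ₗ[ℂ] H)).topologicalClosure)ᗮ : Submodule ℂ H)) ∧
      (Submodule.span ℂ {x : H | ∃ (w : List (Fin d)),
          ∃ g ∈ (((⨆ k, LinearMap.range (T k : H →ₗ[ℂ] H)).topologicalClosure)ᗮ : Submodule ℂ H),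
          x = ((w.map T).prod) g}).topologicalClosure = ⊤ := by
  classical
  have hu2 : ∀ u : Circle, adjoint (Γ u) ∘L Γ u = 1 := fun u => (hunit u).2
  -- decompose the generators into gauge eigenvectors
  have hspec' : ∀ i : Fin s, ∃ c : H →₀ ℂ,
      (↑c.support : Set H) ⊆ {ξ : H | ∃ m : ℤ, ∀ u : Circle, Γ u ξ = ((u : ℂ) ^ m) • ξ} ∧
      (c.sum fun mi r => r • mi) = ζ i := fun i => Submodule.mem_span_set.mp (hspec i)
  choose c hcs hcsum using hspec'
  set F : Finset H := Finset.univ.biUnion (fun i : Fin s => (c i).support) with hF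
  have hFS : ∀ ξ ∈ F, ∃ m : ℤ, ξ ∈ GradedAux.V Γ m := by
    intro ξ hξ
    rw [hF, Finset.mem_biUnion] at hξ
    obtain ⟨i, -, hi⟩ := hξ
    obtain ⟨m, hm⟩ := hcs i hi
    exact ⟨m, hm⟩
  choose! deg hdeg using hFS
  -- bounds on the degrees
  set degs : Finset ℤ := insert 0 (F.image deg) with hdegs
  have hdegsne : degs.Nonempty := ⟨0, by simp [hdegs]⟩
  set n0 : ℤ := degs.min' hdegsne with hn0
  set N : ℤ := degs.max' hdegsne with hN
  have hdegb : ∀ ξ ∈ F, n0 ≤ deg ξ ∧ deg ξ ≤ N := by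
    intro ξ hξ
    have hmem : deg ξ ∈ degs := by
      rw [hdegs]
      exact Finset.mem_insert_of_mem (Finset.mem_image_of_mem deg hξ)
    exact ⟨Finset.min'_le _ _ hmem, Finset.le_max' _ _ hmem⟩
  -- the graded pieces
  set gen : ℤ → Set H := fun n =>
    {x : H | ∃ w : List (Fin d), ∃ ξ ∈ F, (deg ξ : ℤ) + (w.length : ℤ) = n ∧
      x = ((w.map T).prod) ξ} with hgendef
  set D : ℤ → Submodule ℂ H := fun n => Submodule.span ℂ (gen n) with hD
  have hgenfin : ∀ n : ℤ, (gen n).Finite := by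
    intro n
    have hsub : gen n ⊆ (fun p : List (Fin d) × H => ((p.1.map T).prod) p.2) ''
        ({w : List (Fin d) | w.length ≤ (n - n0).toNat} ×ˢ (F : Set H)) := by
      rintro x ⟨w, ξ, hξF, hlen, rfl⟩
      refine ⟨(w, ξ), ⟨?_, hξF⟩, rfl⟩
      have h1 : n0 ≤ deg ξ := (hdegb ξ hξF).1
      simp only [Set.mem_setOf_eq]
      omega
    exact Set.Finite.subset
      (Set.Finite.image _ ((List.finite_length_le (Fin d) (n - n0).toNat).prod F.finite_toSet))
      hsub
  have hDfd : ∀ n : ℤ, FiniteDimensional ℂ (D n) := fun n =>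
    FiniteDimensional.span_of_finite ℂ (hgenfin n)
  have hDV : ∀ n : ℤ, D n ≤ GradedAux.V Γ n := by
    intro n
    refine Submodule.span_le.mpr ?_
    rintro x ⟨w, ξ, hξF, hlen, rfl⟩
    have := GradedAux.V_word hcomm w (hdeg ξ hξF)
    rwa [hlen] at this
  have hTD : ∀ (k : Fin d) (n : ℤ), Submodule.map (T k : H →ₗ[ℂ] H) (D n) ≤ D (n + 1) := by
    intro k n
    rw [show D n = Submodule.span ℂ (gen n) from rfl, Submodule.map_span]
    refine Submodule.span_le.mpr ?_
    rintro x ⟨y, ⟨w, ξ, hξF, hlen, rfl⟩, rfl⟩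
    refine Submodule.subset_span ⟨k :: w, ξ, hξF, ?_, ?_⟩
    · push_cast [List.length_cons]; omega
    · simp [List.map_cons, List.prod_cons, ContinuousLinearMap.mul_apply]
  set R : ℤ → Submodule ℂ H := fun n => ⨆ k : Fin d, Submodule.map (T k : H →ₗ[ℂ] H) (D n) with hR
  have hRD : ∀ n : ℤ, R n ≤ D (n + 1) := fun n => iSup_le fun k => hTD k n
  have hRV : ∀ n : ℤ, R n ≤ GradedAux.V Γ (n + 1) := fun n => (hRD n).trans (hDV (n + 1))
  have hDlow : ∀ n : ℤ, n < n0 → D n = ⊥ := by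
    intro n hn
    rw [show D n = Submodule.span ℂ (gen n) from rfl]
    have : gen n = ∅ := by
      ext x
      simp only [Set.mem_empty_iff_false, iff_false]
      rintro ⟨w, ξ, hξF, hlen, rfl⟩
      have := (hdegb ξ hξF).1
      omega
    rw [this, Submodule.span_empty]
  have hDhigh : ∀ n : ℤ, N < n → D n ≤ R (n - 1) := by
    intro n hn
    refine Submodule.span_le.mpr ?_
    rintro x ⟨w, ξ, hξF, hlen, rfl⟩
    have hdb := (hdegb ξ hξF).2
    cases w with
    | nil => simp only [List.length_nil, Nat.cast_zero, add_zero] at hlen; omega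
    | cons k w' =>
      have hx : ((w'.map T).prod) ξ ∈ gen (n - 1) := by
        refine ⟨w', ξ, hξF, ?_, rfl⟩
        push_cast [List.length_cons] at hlen ⊢
        omega
      have : (((k :: w').map T).prod) ξ = T k (((w'.map T).prod) ξ) := by
        simp [List.map_cons, List.prod_cons, ContinuousLinearMap.mul_apply]
      rw [this]
      exact le_iSup (fun k : Fin d => Submodule.map (T k : H →ₗ[ℂ] H) (D (n - 1))) k
        ⟨_, Submodule.subset_span hx, rfl⟩
  set Z : Submodule ℂ H := (⨆ k, LinearMap.range (T k : H →ₗ[ℂ] H)).topologicalClosure with hZ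
  -- density of the sum of the graded pieces
  have hsubgen : {x : H | ∃ (w : List (Fin d)) (i : Fin s), x = ((w.map T).prod) (ζ i)} ⊆
      (↑(⨆ n : ℤ, D n) : Set H) := by
    rintro x ⟨w, i, rfl⟩
    rw [← hcsum i, map_finsuppSum]
    refine Submodule.sum_mem _ fun ξ hξ => ?_
    simp only [map_smul]
    refine Submodule.smul_mem _ _ ?_
    have hξF : ξ ∈ F := by
      rw [hF, Finset.mem_biUnion]; exact ⟨i, Finset.mem_univ i, hξ⟩
    exact Submodule.mem_iSup_of_mem ((deg ξ : ℤ) + (w.length : ℤ))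
      (Submodule.subset_span ⟨w, ξ, hξF, rfl, rfl⟩)
  have hdense : (⨆ n : ℤ, D n).topologicalClosure = ⊤ := by
    rw [← top_le_iff, ← hgen]
    exact Submodule.topologicalClosure_mono (Submodule.span_le.mpr hsubgen)
  -- `Z` is contained in the closure of the sum of the `R n`
  have hZR : Z ≤ (⨆ n : ℤ, R n).topologicalClosure := by
    rw [hZ]
    refine Submodule.topologicalClosure_minimal _ ?_ (Submodule.isClosed_topologicalClosure _)
    refine iSup_le fun k => ?_
    rintro x ⟨y, rfl⟩
    have hy : y ∈ closure ((↑(⨆ n : ℤ, D n) : Set H)) := by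
      have : y ∈ ((⨆ n : ℤ, D n).topologicalClosure : Submodule ℂ H) := by
        rw [hdense]; trivial
      exact this
    have h1 : T k y ∈ closure ((T k) '' (↑(⨆ n : ℤ, D n) : Set H)) :=
      (image_closure_subset_closure_image (T k).continuous) ⟨y, hy, rfl⟩
    have h2 : (T k) '' (↑(⨆ n : ℤ, D n) : Set H) ⊆ (↑(⨆ n : ℤ, R n) : Set H) := by
      rintro z ⟨y', hy', rfl⟩
      have : y' ∈ (⨆ n : ℤ, D n) := hy'
      -- push membership through the image
      have hmap : Submodule.map (T k : H →ₗ[ℂ] H) (⨆ n : ℤ, D n) ≤ ⨆ n : ℤ, R n := by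
        rw [Submodule.map_iSup]
        refine iSup_mono fun n => ?_
        rw [hR]
        exact le_iSup (fun k : Fin d => Submodule.map (T k : H →ₗ[ℂ] H) (D n)) k
      exact hmap ⟨y', this, rfl⟩
    exact closure_mono h2 h1
  -- elements of `D n` orthogonal to `R (n-1)` lie in `G = Zᗮ`
  have horthR : ∀ (n : ℤ) (g : H), g ∈ D n → (∀ y ∈ R (n - 1), ⟪y, g⟫_ℂ = 0) → g ∈ Zᗮ := by
    intro n g hg hgR
    have h1 : g ∈ (⨆ m : ℤ, R m)ᗮ := by
      rw [← Submodule.iInf_orthogonal, Submodule.mem_iInf]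
      intro m
      rw [Submodule.mem_orthogonal]
      intro y hy
      by_cases hm : m = n - 1
      · exact hgR y (hm ▸ hy)
      · exact GradedAux.V_orthogonal hu2 (by omega) (hRV m hy) (hDV n hg)
    have h2 : ((⨆ m : ℤ, R m).topologicalClosure)ᗮ = (⨆ m : ℤ, R m)ᗮ := by
      rw [← Submodule.orthogonal_orthogonal_eq_closure]
      haveI hcs1 : CompleteSpace ((⨆ m : ℤ, R m)ᗮ : Submodule ℂ H) :=
        (Submodule.isClosed_orthogonal _).completeSpace_coe
      haveI hop1 : Submodule.HasOrthogonalProjection ((⨆ m : ℤ, R m)ᗮ : Submodule ℂ H) :=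
        Submodule.HasOrthogonalProjection.ofCompleteSpace _
      exact Submodule.orthogonal_orthogonal _
    exact Submodule.orthogonal_le hZR (h2 ▸ h1)
  -- Part 1: finite-dimensionality of `G = Zᗮ`
  haveI : CompleteSpace (Z : Submodule ℂ H) :=
    (Submodule.isClosed_topologicalClosure _).completeSpace_coe
  haveI : CompleteSpace ((Zᗮ : Submodule ℂ H)) :=
    (Submodule.isClosed_orthogonal _).completeSpace_coe
  set W : Submodule ℂ H := (Finset.Icc n0 N).sup D with hW
  haveI hWfd : FiniteDimensional ℂ W := by
    exact @Submodule.finiteDimensional_finset_sup ℂ H _ _ _ ℤ (Finset.Icc n0 N) D hDfd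
  have hsupWZ : (⨆ n : ℤ, D n) ≤ W ⊔ Z := by
    refine iSup_le fun n => ?_
    by_cases h1 : n ∈ Finset.Icc n0 N
    · exact le_sup_of_le_left (Finset.le_sup h1)
    · rw [Finset.mem_Icc] at h1
      push_neg at h1
      rcases lt_or_ge n n0 with h2 | h2
      · rw [hDlow n h2]; exact bot_le
      · have h3 : N < n := h1 h2
        refine le_sup_of_le_right ?_
        refine (hDhigh n h3).trans ?_
        refine (iSup_le fun k => ?_ : R (n - 1) ≤ Z)
        refine le_trans (LinearMap.map_le_range) ?_
        exact le_trans (le_iSup (fun k : Fin d => LinearMap.range (T k : H →ₗ[ℂ] H)) k)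
          (Submodule.le_topologicalClosure _)
  have htop : (⊤ : Submodule ℂ H) ≤ (W ⊔ Z).topologicalClosure := by
    rw [← hdense]
    exact Submodule.topologicalClosure_mono hsupWZ
  set Q : H →L[ℂ] H := (Zᗮ).subtypeL ∘L Submodule.orthogonalProjectionOnto Zᗮ with hQ
  have hQG : ∀ g ∈ Zᗮ, Q g = g := by
    intro g hg
    rw [hQ]
    simp only [ContinuousLinearMap.comp_apply, Submodule.subtypeL_apply]
    exact (Submodule.starProjection_eq_self_iff (K := Zᗮ)).mpr hg
  have hQZ : ∀ z ∈ Z, Q z = 0 := by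
    intro z hz
    rw [hQ]
    simp only [ContinuousLinearMap.comp_apply, Submodule.subtypeL_apply]
    have hz' : z ∈ (Zᗮ)ᗮ := Submodule.le_orthogonal_orthogonal Z hz
    rw [Submodule.orthogonalProjectionOnto_apply_of_mem_orthogonal hz']
    simp
  have hQWZ : (Q '' (↑(W ⊔ Z) : Set H)) ⊆ (↑(Submodule.map (Q : H →ₗ[ℂ] H) W) : Set H) := by
    rintro x ⟨y, hy, rfl⟩
    have hy' : y ∈ W ⊔ Z := hy
    rw [Submodule.mem_sup] at hy'
    obtain ⟨w, hw, z, hz, rfl⟩ := hy'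
    rw [map_add, hQZ z hz, add_zero]
    exact ⟨w, hw, rfl⟩
  haveI hmapfd : FiniteDimensional ℂ (Submodule.map (Q : H →ₗ[ℂ] H) W) := by
    have : Submodule.map (Q : H →ₗ[ℂ] H) W = LinearMap.range ((Q : H →ₗ[ℂ] H).comp W.subtype) := by
      rw [LinearMap.range_comp, Submodule.range_subtype]
    rw [this]
    exact LinearMap.finiteDimensional_range _
  have hGle : Zᗮ ≤ Submodule.map (Q : H →ₗ[ℂ] H) W := by
    intro g hg
    have hgc : g ∈ closure (↑(W ⊔ Z) : Set H) := htop trivial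
    have h1 : Q g ∈ closure (Q '' (↑(W ⊔ Z) : Set H)) :=
      (image_closure_subset_closure_image Q.continuous) ⟨g, hgc, rfl⟩
    have h2 : Q g ∈ closure (↑(Submodule.map (Q : H →ₗ[ℂ] H) W) : Set H) :=
      closure_mono hQWZ h1
    rw [IsClosed.closure_eq (Submodule.closed_of_finiteDimensional _)] at h2
    rwa [hQG g hg] at h2
  have part1 : FiniteDimensional ℂ ((Zᗮ : Submodule ℂ H)) :=
    Submodule.finiteDimensional_of_le hGle
  refine ⟨part1, ?_⟩
  -- Part 2: density of the module span of `G`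
  set MG : Submodule ℂ H := Submodule.span ℂ {x : H | ∃ (w : List (Fin d)),
      ∃ g ∈ (Zᗮ : Submodule ℂ H), x = ((w.map T).prod) g} with hMG
  have hGMG : (Zᗮ : Submodule ℂ H) ≤ MG := by
    intro g hg
    refine Submodule.subset_span ⟨[], g, hg, ?_⟩
    simp
  have hTMG : ∀ k : Fin d, Submodule.map (T k : H →ₗ[ℂ] H) MG ≤ MG := by
    intro k
    rw [show MG = Submodule.span ℂ {x : H | ∃ (w : List (Fin d)),
      ∃ g ∈ (Zᗮ : Submodule ℂ H), x = ((w.map T).prod) g} from rfl, Submodule.map_span]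
    refine Submodule.span_le.mpr ?_
    rintro x ⟨y, ⟨w, g, hgG, rfl⟩, rfl⟩
    refine Submodule.subset_span ⟨k :: w, g, hgG, ?_⟩
    simp [List.map_cons, List.prod_cons, ContinuousLinearMap.mul_apply]
  -- key induction step
  have keystep : ∀ n : ℤ, D (n - 1) ≤ MG → D n ≤ MG := by
    intro n hprev x hx
    haveI : FiniteDimensional ℂ (R (n - 1)) := by
      have hle1 : R (n - 1) ≤ D n := by
        have := hRD (n - 1)
        rwa [show n - 1 + 1 = n by omega] at this
      haveI := hDfd n
      exact Submodule.finiteDimensional_of_le hle1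
    have hRle : R (n - 1) ≤ D n := by
      have := hRD (n - 1)
      rwa [show n - 1 + 1 = n by omega] at this
    set y : H := (Submodule.orthogonalProjectionOnto (R (n - 1)) x : H) with hy
    have hyR : y ∈ R (n - 1) := (Submodule.orthogonalProjectionOnto (R (n - 1)) x).2
    have hxy : x - y ∈ (R (n - 1))ᗮ := Submodule.sub_starProjection_mem_orthogonal (K := R (n - 1)) x
    have hxyD : x - y ∈ D n := Submodule.sub_mem _ hx (hRle hyR)
    have hxyG : x - y ∈ Zᗮ := by
      refine horthR n (x - y) hxyD ?_
      intro u hu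
      exact (Submodule.mem_orthogonal _ _).mp hxy u hu
    have hyMG : y ∈ MG := by
      have : R (n - 1) ≤ MG := by
        refine iSup_le fun k => ?_
        exact le_trans (Submodule.map_mono hprev) (hTMG k)
      exact this hyR
    have : x = (x - y) + y := by abel
    rw [this]
    exact Submodule.add_mem _ (hGMG hxyG) hyMG
  have hDMG : ∀ j : ℕ, ∀ n : ℤ, n ≤ n0 + j → D n ≤ MG := by
    intro j
    induction j with
    | zero =>
      intro n hn
      rcases lt_or_eq_of_le hn with h | h
      · rw [hDlow n (by omega)]; exact bot_le
      · refine keystep n ?_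
        rw [hDlow (n - 1) (by omega)]
        exact bot_le
    | succ j ih =>
      intro n hn
      rcases le_or_gt n (n0 + j) with h | h
      · exact ih n h
      · exact keystep n (ih (n - 1) (by omega))
  have hDall : ∀ n : ℤ, D n ≤ MG := by
    intro n
    rcases lt_or_ge n n0 with h | h
    · rw [hDlow n h]; exact bot_le
    · exact hDMG (n - n0).toNat n (by omega)
  rw [← top_le_iff, ← hdense]
  exact Submodule.topologicalClosure_mono (iSup_le hDall)
end

section
/- Let $H$ be a graded Hilbert module with gauge group $\Gamma$, spectral subspaces $H_n$, and suppose $H_n=0$ for $n<n_0$. Let $G=H\ominus(Z\cdot H)$ with graded pieces $G_n=G\cap H_n$. Then $H_{n_0}=G_{n_0}$ and for each $n>n_0$, $H_n$ is the closed span of $G_n + Z\cdot H_{n-1}$, where $Z\cdot H_{n-1}=T_1H_{n-1}+\cdots+T_dH_{n-1}$. -/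
open scoped InnerProductSpace
open ContinuousLinearMap

/-- For a graded Hilbert module with gauge group `Γ`, spectral subspaces `H_n` vanishing
for `n < n₀`, and `G = H ⊖ (Z·H)` with pieces `G_n = G ⊓ H_n`: `H_{n₀} = G_{n₀}` and for
`n > n₀`, `H_n` is the closed span of `G_n + Z·H_{n-1}`. -/
theorem spectral_subspace_decomposition {H : Type*} [NormedAddCommGroup H]
    [InnerProductSpace ℂ H] [CompleteSpace H] (d : ℕ) (T : Fin d → H →L[ℂ] H)
    (hrow : ∀ ξ : Fin d → H, ‖∑ i, T i (ξ i)‖ ^ 2 ≤ ∑ i, ‖ξ i‖ ^ 2)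
    (Γ : Circle → H →L[ℂ] H)
    (hunit : ∀ u : Circle, Γ u ∘L adjoint (Γ u) = 1 ∧ adjoint (Γ u) ∘L Γ u = 1)
    (hcont : ∀ ξ : H, Continuous fun u : Circle => Γ u ξ)
    (hcomm : ∀ (u : Circle) (k : Fin d), Γ u ∘L T k = (u : ℂ) • (T k ∘L Γ u))
    (Hn : ℤ → Submodule ℂ H)
    (hHn : ∀ (m : ℤ) (ξ : H), ξ ∈ Hn m ↔ ∀ u : Circle, Γ u ξ = ((u : ℂ) ^ m) • ξ)
    (n₀ : ℤ) (hbelow : ∀ m : ℤ, m < n₀ → Hn m = ⊥) :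
    let G : Submodule ℂ H := ((⨆ k, LinearMap.range (T k : H →ₗ[ℂ] H)).topologicalClosure)ᗮ
    Hn n₀ = G ⊓ Hn n₀ ∧
      ∀ m : ℤ, n₀ < m →
        Hn m = ((G ⊓ Hn m) ⊔
          ⨆ k, Submodule.map (T k : H →ₗ[ℂ] H) (Hn (m - 1))).topologicalClosure := by
  intro G
  -- commutation of the adjoints with the gauge group
  have hstar : ∀ (u : Circle) (k : Fin d),
      Γ u ∘L adjoint (T k) = (starRingEnd ℂ (u : ℂ)) • (adjoint (T k) ∘L Γ u) := by
    intro u k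
    have h1 : Γ u * T k = (u : ℂ) • (T k * Γ u) := by
      rw [mul_def, mul_def]; exact hcomm u k
    have h2 := congrArg star h1
    rw [star_smul, star_mul, star_mul, star_eq_adjoint, star_eq_adjoint] at h2
    rw [show star ((u : ℂ)) = starRingEnd ℂ (u : ℂ) from rfl] at h2
    -- h2 : adjoint (T k) * adjoint (Γ u) = (conj u) • (adjoint (Γ u) * adjoint (T k))
    have hA1 : Γ u * adjoint (Γ u) = 1 := by rw [mul_def]; exact (hunit u).1
    have hA2 : adjoint (Γ u) * Γ u = 1 := by rw [mul_def]; exact (hunit u).2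
    have h3 := congrArg (fun X : H →L[ℂ] H => Γ u * X * Γ u) h2
    beta_reduce at h3
    rw [← mul_def (Γ u) (adjoint (T k)), ← mul_def (adjoint (T k)) (Γ u)]
    calc Γ u * adjoint (T k)
        = Γ u * adjoint (T k) * (adjoint (Γ u) * Γ u) := by rw [hA2, mul_one]
      _ = Γ u * (adjoint (T k) * adjoint (Γ u)) * Γ u := by simp only [mul_assoc]
      _ = Γ u * ((starRingEnd ℂ (u : ℂ)) • (adjoint (Γ u) * adjoint (T k))) * Γ u := by rw [h2]
      _ = (starRingEnd ℂ (u : ℂ)) • (Γ u * adjoint (Γ u) * (adjoint (T k) * Γ u)) := by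
            simp only [mul_smul_comm, smul_mul_assoc, mul_assoc]
      _ = (starRingEnd ℂ (u : ℂ)) • (adjoint (T k) * Γ u) := by rw [hA1, one_mul]
  -- the adjoints lower the grading
  have hadj_mem : ∀ (m : ℤ) (k : Fin d) (ξ : H), ξ ∈ Hn m →
      adjoint (T k) ξ ∈ Hn (m - 1) := by
    intro m k ξ hξ
    rw [hHn]
    intro u
    have h1 := congrFun (congrArg DFunLike.coe (hstar u k)) ξ
    simp only [comp_apply, smul_apply] at h1
    rw [h1, (hHn m ξ).1 hξ u, map_smul, smul_smul]
    congr 1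
    rw [← Circle.coe_inv_eq_conj, Circle.coe_inv]
    rw [zpow_sub_one₀ (Circle.coe_ne_zero u), mul_comm]
  -- the operators raise the grading
  have hfwd : ∀ (m : ℤ) (k : Fin d) (ξ : H), ξ ∈ Hn m → T k ξ ∈ Hn (m + 1) := by
    intro m k ξ hξ
    rw [hHn]
    intro u
    have h1 := congrFun (congrArg DFunLike.coe (hcomm u k)) ξ
    simp only [comp_apply, smul_apply] at h1
    rw [h1, (hHn m ξ).1 hξ u, map_smul, smul_smul]
    congr 1
    rw [zpow_add_one₀ (Circle.coe_ne_zero u), mul_comm]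
  -- the spectral subspaces are closed
  have hclosed : ∀ m : ℤ, IsClosed (Hn m : Set H) := by
    intro m
    have : (Hn m : Set H) = ⋂ u : Circle, {ξ : H | Γ u ξ = ((u : ℂ) ^ m) • ξ} := by
      ext ξ
      simp only [SetLike.mem_coe, hHn, Set.mem_iInter, Set.mem_setOf_eq]
    rw [this]
    exact isClosed_iInter fun u =>
      isClosed_eq (Γ u).continuous (continuous_id.const_smul _)
  -- vectors killed by all adjoints lie in G
  have hG : ∀ ξ : H, (∀ k, adjoint (T k) ξ = 0) → ξ ∈ G := by
    intro ξ hξ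
    have hle : (⨆ k, LinearMap.range (T k : H →ₗ[ℂ] H)) ≤ (ℂ ∙ ξ)ᗮ := by
      apply iSup_le
      intro k y hy
      obtain ⟨η, rfl⟩ := hy
      rw [Submodule.mem_orthogonal]
      intro v hv
      obtain ⟨c, rfl⟩ := Submodule.mem_span_singleton.mp hv
      rw [inner_smul_left]
      have h0 : ⟪ξ, T k η⟫_ℂ = 0 := by
        rw [← adjoint_inner_left, hξ k, inner_zero_left]
      rw [ContinuousLinearMap.coe_coe, h0, mul_zero]
    have hle2 : (⨆ k, LinearMap.range (T k : H →ₗ[ℂ] H)).topologicalClosure ≤ (ℂ ∙ ξ)ᗮ :=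
      Submodule.topologicalClosure_minimal _ hle (Submodule.isClosed_orthogonal _)
    exact (Submodule.orthogonal_le hle2)
      (Submodule.le_orthogonal_orthogonal _ (Submodule.mem_span_singleton_self ξ))
  constructor
  · -- H_{n₀} = G ⊓ H_{n₀}
    refine le_antisymm (le_inf ?_ le_rfl) inf_le_right
    intro ξ hξ
    apply hG
    intro k
    have h1 := hadj_mem n₀ k ξ hξ
    rw [hbelow (n₀ - 1) (by omega)] at h1
    simpa using h1
  · -- H_m = closure (G ⊓ H_m ⊔ ⨆ k, T_k H_{m-1})
    intro m _
    set W := ((G ⊓ Hn m) ⊔ ⨆ k, Submodule.map (T k : H →ₗ[ℂ] H) (Hn (m - 1))).topologicalClosure with hWdef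
    have hWle : W ≤ Hn m := by
      refine Submodule.topologicalClosure_minimal _ ?_ (hclosed m)
      apply sup_le inf_le_right
      apply iSup_le
      intro k y hy
      obtain ⟨η, hη, rfl⟩ := hy
      have := hfwd (m - 1) k η hη
      simpa using this
    refine le_antisymm ?_ hWle
    intro ξ hξ
    haveI : CompleteSpace W :=
      (Submodule.isClosed_topologicalClosure _).completeSpace_coe
    obtain ⟨y, hy, z, hz, rfl⟩ := W.exists_add_mem_mem_orthogonal ξ
    have hzH : z ∈ Hn m := by
      have := (Hn m).sub_mem hξ (hWle hy)
      simpa using this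
    have hz0 : ∀ k, adjoint (T k) z = 0 := by
      intro k
      have h1 : adjoint (T k) z ∈ Hn (m - 1) := hadj_mem m k z hzH
      have h2 : T k (adjoint (T k) z) ∈ W := by
        apply Submodule.le_topologicalClosure
        exact ((le_iSup (fun k => Submodule.map (T k : H →ₗ[ℂ] H) (Hn (m - 1))) k).trans le_sup_right) ⟨_, h1, rfl⟩
      have h3 : ⟪adjoint (T k) z, adjoint (T k) z⟫_ℂ = 0 := by
        rw [adjoint_inner_left]
        exact (Submodule.mem_orthogonal' _ _).mp hz _ h2
      exact inner_self_eq_zero.mp h3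
    have hzW : z ∈ W :=
      Submodule.le_topologicalClosure _ (Submodule.mem_sup_left ⟨hG z hz0, hzH⟩)
    have hz00 : z = 0 := by
      have h3 : ⟪z, z⟫_ℂ = 0 := (Submodule.mem_orthogonal' _ _).mp hz _ hzW
      exact inner_self_eq_zero.mp h3
    rw [hz00, add_zero]
    exact hy
end

section
/- For $d\ge 2$, the full Fock space $F^2$ over $\mathbb C^d$ contains a closed graded submodule $M$ over $\mathbb C\langle z_1,\dots,z_d\rangle$ that is not finitely generated: there exists $M$ such that $M\ominus(Z\cdot M)$ contains an infinite orthonormal sequence; in particular the defect of $M$ is infinite. -/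
open scoped InnerProductSpace

/-- The full Fock space over `ℂ^d`, realized as `ℓ²` of the free monoid of words in `d`
letters, with `L i` the left creation operators. -/
abbrev FullFock (d : ℕ) : Type := lp (fun _ : List (Fin d) => ℂ) 2

/-- For `d ≥ 2`, the full Fock space over `ℂ^d` contains a closed graded submodule `M`
over `ℂ⟨z₁,…,z_d⟩` that is not finitely generated: `M ⊖ (Z·M)` contains an infinite
orthonormal sequence, so the defect of `M` is infinite. -/
theorem exists_graded_submodule_not_finitely_generated (d : ℕ) (hd : 2 ≤ d)
    (L : Fin d → FullFock d →L[ℂ] FullFock d)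
    (hL : ∀ (i : Fin d) (w : List (Fin d)),
      L i (lp.single 2 w (1 : ℂ)) = lp.single 2 (i :: w) (1 : ℂ)) :
    ∃ M : Submodule ℂ (FullFock d),
      IsClosed (M : Set (FullFock d)) ∧
      (∀ i : Fin d, ∀ x ∈ M, L i x ∈ M) ∧
      -- `M` is graded: it is the closed span of its homogeneous pieces
      (M = (⨆ m : ℕ, M ⊓ (Submodule.span ℂ {x : FullFock d | ∃ w : List (Fin d),
          w.length = m ∧ x = lp.single 2 w (1 : ℂ)}).topologicalClosure).topologicalClosure) ∧
      ∃ ζ : ℕ → FullFock d, Orthonormal ℂ ζ ∧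
        ∀ j : ℕ, ζ j ∈ M ⊓ ((⨆ i, Submodule.map (L i).toLinearMap M).topologicalClosure)ᗮ := by
  classical
  set a : Fin d := ⟨0, by omega⟩ with ha
  set b : Fin d := ⟨1, by omega⟩ with hb
  have hab : a ≠ b := by simp [ha, hb, Fin.ext_iff]
  set g : ℕ → List (Fin d) := fun n => b :: (List.replicate n a ++ [b]) with hg
  set E : List (Fin d) → FullFock d := fun w => lp.single 2 w (1 : ℂ) with hE
  set S : Set (List (Fin d)) := {w | ∃ u n, w = u ++ g n} with hS
  set K : Submodule ℂ (FullFock d) := Submodule.span ℂ (E '' S) with hK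
  -- key combinatorial fact: no `g j` ends in a shorter `g m`
  have key : ∀ (j m : ℕ) (i : Fin d) (u : List (Fin d)),
      g j ≠ i :: (u ++ g m) := by
    intro j m i u h
    simp only [hg] at h
    have hlen : j = u.length + m + 1 := by
      have := congrArg List.length h
      simp at this; omega
    have h2 := congrArg (List.drop (u.length + 1)) h
    rw [List.drop_succ_cons, List.drop_succ_cons, List.drop_left] at h2
    have hule : u.length ≤ (List.replicate j a).length := by simp; omega
    rw [List.drop_append_of_le_length hule, List.drop_replicate] at h2
    have hjm : j - u.length = m + 1 := by omega
    rw [hjm, List.replicate_succ] at h2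
    simp only [List.cons_append, List.cons.injEq] at h2
    exact hab h2.1
  -- inner products of basis vectors
  have hEE : ∀ v w : List (Fin d), ⟪E v, E w⟫_ℂ = if w = v then 1 else 0 := by
    intro v w
    rw [hE]
    simp only
    rw [lp.inner_single_left]
    simp only [lp.single_apply]
    simp [eq_comm, Pi.single_apply]
  refine ⟨K.topologicalClosure, Submodule.isClosed_topologicalClosure _, ?_, ?_, ?_⟩
  · -- invariance under the creation operators
    intro i x hx
    have hmap : Submodule.map (L i).toLinearMap K ≤ K := by
      rw [hK, Submodule.map_span]
      apply Submodule.span_le.2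
      rintro _ ⟨_, ⟨w, ⟨u, n, rfl⟩, rfl⟩, rfl⟩
      refine Submodule.subset_span ⟨i :: (u ++ g n), ⟨i :: u, n, by simp⟩, ?_⟩
      simp [hE, hL]
    have := Submodule.topologicalClosure_map (L i) K
    have hx2 : L i x ∈ (Submodule.map (L i).toLinearMap K).topologicalClosure :=
      this ⟨x, hx, rfl⟩
    exact Submodule.topologicalClosure_mono hmap hx2
  · -- gradedness
    apply le_antisymm
    · have hKle : K ≤ ⨆ m : ℕ, K.topologicalClosure ⊓
          (Submodule.span ℂ {x : FullFock d | ∃ w : List (Fin d),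
            w.length = m ∧ x = lp.single 2 w (1 : ℂ)}).topologicalClosure := by
        rw [hK]
        apply Submodule.span_le.2
        rintro _ ⟨w, hw, rfl⟩
        refine le_iSup (fun m => K.topologicalClosure ⊓ _) w.length ?_
        constructor
        · exact Submodule.le_topologicalClosure _ (Submodule.subset_span ⟨w, hw, rfl⟩)
        · exact Submodule.le_topologicalClosure _ (Submodule.subset_span ⟨w, rfl, rfl⟩)
      exact Submodule.topologicalClosure_mono hKle
    · exact Submodule.topologicalClosure_minimal _
        (iSup_le fun m => inf_le_left) (Submodule.isClosed_topologicalClosure _)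
  · -- the infinite orthonormal family in the defect space
    refine ⟨fun j => E (g j), ?_, ?_⟩
    · rw [orthonormal_iff_ite]
      intro i j
      rw [hEE]
      by_cases hij : i = j
      · simp [hij]
      · have : g j ≠ g i := by
          intro h
          have := congrArg List.length h
          simp [hg] at this
          exact hij this.symm
        simp [hij, this]
    · intro j
      constructor
      · exact Submodule.le_topologicalClosure _
          (Submodule.subset_span ⟨g j, ⟨[], j, by simp⟩, rfl⟩)
      · show E (g j) ∈ (_ : Submodule ℂ (FullFock d))ᗮ
        rw [Submodule.mem_orthogonal']
        intro u hu
        set φ : FullFock d →L[ℂ] ℂ := innerSL ℂ (E (g j)) with hφ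
        have hker : (⨆ i, Submodule.map (L i).toLinearMap K.topologicalClosure).topologicalClosure ≤
            LinearMap.ker φ.toLinearMap := by
          refine Submodule.topologicalClosure_minimal _ ?_ (ContinuousLinearMap.isClosed_ker φ)
          apply iSup_le
          intro i
          rintro _ ⟨x, hx, rfl⟩
          have hker2 : K.topologicalClosure ≤ LinearMap.ker (φ.comp (L i)).toLinearMap := by
            refine Submodule.topologicalClosure_minimal _ ?_ (ContinuousLinearMap.isClosed_ker (φ.comp (L i)))
            rw [hK]
            apply Submodule.span_le.2
            rintro _ ⟨w, ⟨v, n, rfl⟩, rfl⟩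
            have : L i (E (v ++ g n)) = E (i :: (v ++ g n)) := by simp [hE, hL]
            simp only [SetLike.mem_coe, LinearMap.mem_ker, ContinuousLinearMap.coe_coe, ContinuousLinearMap.coe_comp',
              Function.comp_apply, this, hφ, innerSL_apply_apply]
            rw [hEE]
            exact if_neg (fun h => key j n i v h.symm)
          have := hker2 hx
          simpa using this
        have := hker hu
        simpa [hφ] using this
end

section
/- Let $H$, $K$ be Hilbert modules over $\mathbb C\langle z_1,\dots,z_d\rangle$ and let $A:H\to K$ be a contractive module homomorphism with dense range inducing an injective map $\dot A$ on defect quotients (in particular $\ker A\subseteq Z\cdot H$). Let $H^0$ be the algebraic module spanned by $\{f\cdot\zeta : f$ a polynomial, $\zeta\in H\ominus(Z\cdot H)\}$. Then the restriction $A^0$ of $A$ to $H^0$ is a minimal module homomorphism: $\ker A^0\subseteq z_1\cdot H^0+\cdots+z_d\cdot H^0$. -/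
open scoped InnerProductSpace
open ContinuousLinearMap

/-- Let `A : H → K` be a contractive module homomorphism with dense range inducing an
injective map on defect quotients (so `ker A ⊆ Z·H`), and let `H⁰` be the algebraic
module generated by `H ⊖ (Z·H)`. Then the restriction `A⁰` of `A` to `H⁰` is minimal:
`ker A⁰ ⊆ z₁·H⁰ + ⋯ + z_d·H⁰`. -/
theorem restriction_to_algebraic_module_minimal {H K : Type*}
    [NormedAddCommGroup H] [InnerProductSpace ℂ H] [CompleteSpace H]
    [NormedAddCommGroup K] [InnerProductSpace ℂ K] [CompleteSpace K]
    (d : ℕ) (T : Fin d → H →L[ℂ] H) (T' : Fin d → K →L[ℂ] K)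
    (hrowT : ∀ ξ : Fin d → H, ‖∑ i, T i (ξ i)‖ ^ 2 ≤ ∑ i, ‖ξ i‖ ^ 2)
    (hrowT' : ∀ ξ : Fin d → K, ‖∑ i, T' i (ξ i)‖ ^ 2 ≤ ∑ i, ‖ξ i‖ ^ 2)
    (A : H →L[ℂ] K) (hA : ‖A‖ ≤ 1) (hmod : ∀ k, A ∘L T k = T' k ∘L A)
    (hdense : DenseRange A)
    (hker : LinearMap.ker (A : H →ₗ[ℂ] K) ≤ (⨆ k, LinearMap.range (T k : H →ₗ[ℂ] H)).topologicalClosure) :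
    let H0 : Submodule ℂ H := Submodule.span ℂ {x : H | ∃ (w : List (Fin d)),
      ∃ g ∈ (((⨆ k, LinearMap.range (T k : H →ₗ[ℂ] H)).topologicalClosure)ᗮ : Submodule ℂ H),
      x = ((w.map T).prod) g}
    ∀ ξ ∈ H0, A ξ = 0 → ξ ∈ ⨆ k, Submodule.map (T k : H →ₗ[ℂ] H) H0 := by
  intro H0 ξ hξ hAξ
  set Z := (⨆ k, LinearMap.range (T k : H →ₗ[ℂ] H)).topologicalClosure with hZ
  have hM : (⨆ k, Submodule.map (T k : H →ₗ[ℂ] H) H0) ≤ Z := by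
    refine iSup_le fun k => ?_
    refine le_trans ?_ ((le_iSup (fun k => LinearMap.range (T k : H →ₗ[ℂ] H)) k).trans
      (Submodule.le_topologicalClosure _))
    rintro x ⟨y, -, rfl⟩
    exact ⟨y, rfl⟩
  have hspan : H0 ≤ Zᗮ ⊔ (⨆ k, Submodule.map (T k : H →ₗ[ℂ] H) H0) := by
    refine Submodule.span_le.mpr ?_
    rintro x ⟨w, g, hg, rfl⟩
    cases w with
    | nil =>
      simp only [List.map_nil, List.prod_nil, ContinuousLinearMap.one_apply]
      exact Submodule.mem_sup_left hg
    | cons k w' =>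
      refine Submodule.mem_sup_right (Submodule.mem_iSup_of_mem k ?_)
      refine Submodule.mem_map.mpr ⟨((w'.map T).prod) g, Submodule.subset_span ⟨w', g, hg, rfl⟩, ?_⟩
      simp only [List.map_cons, List.prod_cons, ContinuousLinearMap.mul_apply, ContinuousLinearMap.coe_coe]
  obtain ⟨g, hg, η, hη, rfl⟩ := Submodule.mem_sup.mp (hspan hξ)
  have hξZ : g + η ∈ Z := hker (by simpa using hAξ)
  have hgZ : g ∈ Z := by
    have h := Z.sub_mem hξZ (hM hη)
    simpa using h
  have hg0 : g = 0 := by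
    have := (Submodule.orthogonal_disjoint Z).le_bot ⟨hgZ, hg⟩
    simpa using this
  rw [hg0, zero_add]
  exact hη
end

section
/- Let $H$ be a pure contractive Hilbert module of finite rank over $\mathbb C\langle z_1,\dots,z_d\rangle$ whose defect operator $\Delta=(\mathbf 1-T_1T_1^*-\cdots-T_dT_d^*)^{1/2}$ is an orthogonal projection. Then $H$ is properly generated: the range of $\Delta$ equals $\ker T_1^*\cap\cdots\cap\ker T_d^*$ and is a generator for $H$. -/
open scoped InnerProductSpace
open ContinuousLinearMap Filter

private lemma aux_sum_adj {H : Type*} [NormedAddCommGroup H]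
    [InnerProductSpace ℂ H] [CompleteSpace H] {d : ℕ} (T : Fin d → H →L[ℂ] H)
    (Δ : H →L[ℂ] H)
    (hΔsq : Δ ∘L Δ = (1 : H →L[ℂ] H) - ∑ k, T k ∘L adjoint (T k)) (ξ : H) :
    ∑ k, ⟪adjoint (T k) ξ, adjoint (T k) ξ⟫_ℂ = ⟪ξ, ξ - Δ (Δ ξ)⟫_ℂ := by
  have h1 : ∀ k : Fin d, ⟪adjoint (T k) ξ, adjoint (T k) ξ⟫_ℂ
      = ⟪ξ, T k (adjoint (T k) ξ)⟫_ℂ := fun k =>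
    ContinuousLinearMap.adjoint_inner_left _ _ _
  rw [Finset.sum_congr rfl fun k _ => h1 k, ← inner_sum]
  have h2 : ∑ k, T k (adjoint (T k) ξ) = (∑ k, T k ∘L adjoint (T k)) ξ := by
    simp [ContinuousLinearMap.sum_apply, ContinuousLinearMap.comp_apply]
  have h3 : (∑ k, T k ∘L adjoint (T k)) = (1 : H →L[ℂ] H) - Δ ∘L Δ := by
    rw [hΔsq]; abel
  rw [h2, h3]
  simp [ContinuousLinearMap.comp_apply]
  simp [inner_sub_right]

private lemma aux_iter_inner {H : Type*} [NormedAddCommGroup H]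
    [InnerProductSpace ℂ H] [CompleteSpace H] {d : ℕ} (T : Fin d → H →L[ℂ] H)
    (Δ : H →L[ℂ] H)
    (hΔsq : Δ ∘L Δ = (1 : H →L[ℂ] H) - ∑ k, T k ∘L adjoint (T k)) :
    ∀ n (ξ : H), (∀ w : List (Fin d), Δ (adjoint ((w.map T).prod) ξ) = 0) →
      ⟪(((fun X => ∑ k, T k ∘L X ∘L adjoint (T k))^[n]) 1) ξ, ξ⟫_ℂ = ⟪ξ, ξ⟫_ℂ := by
  intro n
  induction n with
  | zero => intro ξ _; simp
  | succ n ih =>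
    intro ξ h
    rw [Function.iterate_succ_apply']
    simp only [ContinuousLinearMap.sum_apply, ContinuousLinearMap.comp_apply]
    rw [sum_inner]
    have step : ∀ k : Fin d,
        ⟪T k ((((fun X => ∑ k, T k ∘L X ∘L adjoint (T k))^[n]) 1)
          (adjoint (T k) ξ)), ξ⟫_ℂ = ⟪adjoint (T k) ξ, adjoint (T k) ξ⟫_ℂ := by
      intro k
      rw [← ContinuousLinearMap.adjoint_inner_right]
      refine ih (adjoint (T k) ξ) ?_
      intro w
      have hk := h (k :: w)
      simp only [List.map_cons, List.prod_cons] at hk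
      rw [show (T k * (w.map T).prod) = T k ∘L (w.map T).prod from rfl,
        ContinuousLinearMap.adjoint_comp] at hk
      simpa using hk
    rw [Finset.sum_congr rfl fun k _ => step k, aux_sum_adj T Δ hΔsq ξ]
    have h0 : Δ ξ = 0 := by
      simpa [ContinuousLinearMap.one_def, ContinuousLinearMap.adjoint_id] using h []
    simp [h0]

/-- A pure finite-rank contractive Hilbert module whose defect operator
`Δ = (1 - ∑ T_kT_k*)^{1/2}` is an orthogonal projection is properly generated: the range
of `Δ` equals `⋂ ker T_k*` and generates `H`. -/
theorem pure_projection_defect_properly_generated {H : Type*} [NormedAddCommGroup H]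
    [InnerProductSpace ℂ H] [CompleteSpace H] (d : ℕ) (T : Fin d → H →L[ℂ] H)
    (hrow : ∀ ξ : Fin d → H, ‖∑ i, T i (ξ i)‖ ^ 2 ≤ ∑ i, ‖ξ i‖ ^ 2)
    (Δ : H →L[ℂ] H) (hΔpos : Δ.IsPositive)
    (hΔsq : Δ ∘L Δ = (1 : H →L[ℂ] H) - ∑ k, T k ∘L adjoint (T k))
    (hΔproj : Δ ∘L Δ = Δ)
    (hpure : ∀ ξ : H, Tendsto
      (fun n : ℕ => (((fun X => ∑ k, T k ∘L X ∘L adjoint (T k))^[n]) 1) ξ)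
      atTop (nhds 0))
    (hfin : FiniteDimensional ℂ (LinearMap.range (Δ : H →ₗ[ℂ] H) : Submodule ℂ H)) :
    LinearMap.range (Δ : H →ₗ[ℂ] H) = ⨅ k, LinearMap.ker (adjoint (T k) : H →ₗ[ℂ] H) ∧
      (Submodule.span ℂ {x : H | ∃ (w : List (Fin d)),
        ∃ g ∈ LinearMap.range (Δ : H →ₗ[ℂ] H), x = ((w.map T).prod) g}).topologicalClosure = ⊤ := by
  constructor
  · ext ξ
    simp only [LinearMap.mem_range, Submodule.mem_iInf, LinearMap.mem_ker,
      ContinuousLinearMap.coe_coe]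
    constructor
    · rintro ⟨η, rfl⟩
      have hfix : Δ (Δ η) = Δ η := by
        have := congrArg (fun A : H →L[ℂ] H => A η) hΔproj
        simpa using this
      set ξ := Δ η with hξdef
      have hsum : ∑ k : Fin d, ⟪adjoint (T k) ξ, adjoint (T k) ξ⟫_ℂ = 0 := by
        rw [aux_sum_adj T Δ hΔsq ξ]
        have hfix2 : Δ (Δ ξ) = ξ := by rw [hξdef, hfix, hfix]
        simp [hfix2]
      intro k
      have hsumR : ∑ k : Fin d, ‖adjoint (T k) ξ‖ ^ 2 = (0 : ℝ) := by
        have hc : ((∑ k : Fin d, ‖adjoint (T k) ξ‖ ^ 2 : ℝ) : ℂ) = 0 := by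
          push_cast
          simpa [inner_self_eq_norm_sq_to_K] using hsum
        exact_mod_cast hc
      have hterm := (Finset.sum_eq_zero_iff_of_nonneg
        (fun k _ => by positivity : ∀ k ∈ Finset.univ,
          (0:ℝ) ≤ ‖adjoint (T k) ξ‖ ^ 2)).mp hsumR k (Finset.mem_univ k)
      have : ‖adjoint (T k) ξ‖ = 0 := by nlinarith [norm_nonneg (adjoint (T k) ξ)]
      simpa using this
    · intro hk
      refine ⟨ξ, ?_⟩
      have := congrArg (fun A : H →L[ℂ] H => A ξ) (hΔproj.symm.trans hΔsq)
      simpa [ContinuousLinearMap.comp_apply, hk] using this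
  · rw [Submodule.topologicalClosure_eq_top_iff]
    rw [Submodule.eq_bot_iff]
    intro ξ hξ
    rw [Submodule.mem_orthogonal] at hξ
    have hw : ∀ w : List (Fin d), Δ (adjoint ((w.map T).prod) ξ) = 0 := by
      intro w
      set a := adjoint ((w.map T).prod) ξ with ha
      have h0 : ∀ η : H, ⟪η, Δ a⟫_ℂ = 0 := by
        intro η
        have hmem : ((w.map T).prod) (Δ η) ∈ Submodule.span ℂ
            {x : H | ∃ (w : List (Fin d)),
              ∃ g ∈ LinearMap.range (Δ : H →ₗ[ℂ] H), x = ((w.map T).prod) g} :=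
          Submodule.subset_span ⟨w, Δ η, ⟨η, rfl⟩, rfl⟩
        have hz := hξ _ hmem
        rw [← ContinuousLinearMap.adjoint_inner_right] at hz
        rw [← ha] at hz
        have hsa : adjoint Δ = Δ := hΔpos.isSelfAdjoint
        calc ⟪η, Δ a⟫_ℂ = ⟪adjoint Δ η, a⟫_ℂ := by
              rw [ContinuousLinearMap.adjoint_inner_left]
          _ = ⟪Δ η, a⟫_ℂ := by rw [hsa]
          _ = 0 := hz
      exact inner_self_eq_zero.mp (h0 (Δ a))
    have hconst : ∀ n : ℕ,
        ⟪(((fun X => ∑ k, T k ∘L X ∘L adjoint (T k))^[n]) 1) ξ, ξ⟫_ℂ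
          = ⟪ξ, ξ⟫_ℂ := fun n => aux_iter_inner T Δ hΔsq n ξ hw
    have hlim : Tendsto
        (fun n : ℕ => ⟪(((fun X => ∑ k, T k ∘L X ∘L adjoint (T k))^[n]) 1) ξ, ξ⟫_ℂ)
        atTop (nhds (0 : ℂ)) := by
      have := Filter.Tendsto.inner (𝕜 := ℂ) (hpure ξ) (tendsto_const_nhds (x := ξ) (f := (atTop : Filter ℕ)))
      simpa using this
    have hz : ⟪ξ, ξ⟫_ℂ = 0 := by
      have hlim2 : Tendsto (fun _ : ℕ => ⟪ξ, ξ⟫_ℂ) atTop (nhds (0 : ℂ)) :=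
        hlim.congr fun n => hconst n
      exact tendsto_nhds_unique tendsto_const_nhds hlim2
    exact inner_self_eq_zero.mp hz
end
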